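/- (Reduction of short returns from the truncated tower to the base) For every measurable section A ⊆ Δ (with π_X(A) and π_{Δ_m}A measurable) and every integer K ≥ 2, ∫_{Δ_m} 1_{π_{Δ_m}A} · 1_{⋃_{j=1}^{K−1} T_m^{-j}(π_{Δ_m}A)} dμ_{Δ_m} ≤ (∫ min(R, m+1) dμ_X)^{-1} · ∫_X 1_{π_X(A)} · 1_{⋃_{j=1}^{K} g^{-j}(π_X(A))} dμ_X. -/

import Mathlib

/-!
On the truncated tower, `T_m` either climbs one level in the column over `x` or jumps to the
base over `g x`, so `T_mʲ (x, n)` lies over `gⁱ x` for some `i ≤ j`, and lies over `x` itself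
only at level `n + j`. A section meets each column at most once, so a return of `π_{Δ_m} A` to
itself after `j ≥ 1` steps of `T_m` yields a return of `π_X A` to itself after some
`i ∈ [1, j]` steps of `g`. For the same reason a measurable subset of a section has
`μ_Δ`-measure at most `(∫ R)⁻¹` times the `μ_X`-measure of its projection, and
`μ_Δ(Δ_m) = (∫ R)⁻¹ ∫ min(R, m+1)` supplies the constant.
-/

open MeasureTheory Filter Set Topology
open scoped ENNReal NNReal

variable {X : Type*} [MeasurableSpace X]

/-- The Young tower `Δ := {(x,n) : n < R x}`, viewed as a subset of `X × ℕ`. -/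
def towerSet (R : X → ℕ) : Set (X × ℕ) := {p | p.2 < R p.1}

/-- The tower map `F(x,n) = (x, n+1)` if `n+1 < R x`, and `F(x,n) = (g x, 0)`
otherwise. -/
def towerMap (R : X → ℕ) (g : X → X) : X × ℕ → X × ℕ :=
  fun p => if p.2 + 1 < R p.1 then (p.1, p.2 + 1) else (g p.1, 0)

/-- The tower measure `μ_Δ(E) = (∫ R dμ_X)⁻¹ Σ_{n≥0} μ_X {x : n < R x ∧ (x,n) ∈ E}`. -/
noncomputable def towerMeasure (μX : Measure X) (R : X → ℕ) : Measure (X × ℕ) :=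
  (∫⁻ x, (R x : ℝ≥0∞) ∂μX)⁻¹ •
    Measure.sum (fun n : ℕ => Measure.map (fun x => (x, n)) (μX.restrict {x | n < R x}))

/-- The truncated tower `Δ_m := {(x,n) ∈ Δ : n ≤ m}`. -/
def truncSet (R : X → ℕ) (m : ℕ) : Set (X × ℕ) := {p | p.2 < R p.1 ∧ p.2 ≤ m}

/-- The normalized measure `μ_{Δ_m} := μ_Δ(· ∩ Δ_m)/μ_Δ(Δ_m)`. -/
noncomputable def truncMeasure (μX : Measure X) (R : X → ℕ) (m : ℕ) : Measure (X × ℕ) :=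
  (towerMeasure μX R (truncSet R m))⁻¹ • (towerMeasure μX R).restrict (truncSet R m)

/-- The truncation map `π_{Δ_m}(x,n) := (x, min n m)`. -/
def truncProj (m : ℕ) : X × ℕ → X × ℕ := fun p => (p.1, min p.2 m)

/-- The first return time `R_m(z) := inf {n ≥ 1 : F^n z ∈ Δ_m}` to the truncated
tower. -/
noncomputable def returnTime (R : X → ℕ) (g : X → X) (m : ℕ) (z : X × ℕ) : ℕ :=
  sInf {n | 1 ≤ n ∧ (towerMap R g)^[n] z ∈ truncSet R m}

/-- The induced map `T_m := F^{R_m}` on the truncated tower. -/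
noncomputable def inducedMap (R : X → ℕ) (g : X → X) (m : ℕ) : X × ℕ → X × ℕ :=
  fun z => (towerMap R g)^[returnTime R g m z] z

lemma lintegral_natCast_eq_tsum_measure_lt {α : Type*} [MeasurableSpace α] (μ : Measure α)
    {f : α → ℕ} (hf : Measurable f) :
    ∫⁻ x, (f x : ℝ≥0∞) ∂μ = ∑' n : ℕ, μ {x | n < f x} := by
  have hs : ∀ n : ℕ, MeasurableSet {x | n < f x} := fun n => measurableSet_lt measurable_const hf
  have hf_tsum : ∀ x, (f x : ℝ≥0∞) = ∑' n : ℕ, {x | n < f x}.indicator (fun _ => 1) x := by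
    intro x
    rw [tsum_eq_sum (s := Finset.range (f x)) fun n hn => by simp_all]
    simp [Set.indicator_apply, Finset.filter_true_of_mem]
  simp_rw [hf_tsum]
  rw [lintegral_tsum fun n => (measurable_const.indicator (hs n)).aemeasurable]
  exact tsum_congr fun n => lintegral_indicator_one (hs n)

theorem ENNReal.inv_mul_mul_le (a b c : ℝ≥0∞) : (c * a)⁻¹ * (c * b) ≤ a⁻¹ * b := by
  rcases eq_or_ne c 0 with rfl | hc0
  · simp
  rcases eq_or_ne c ⊤ with rfl | hct
  · rcases eq_or_ne a 0 with rfl | ha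
    · rcases eq_or_ne b 0 with rfl | hb <;> simp [*]
    · simp [ENNReal.top_mul ha]
  · rw [ENNReal.mul_inv (.inl hc0) (.inl hct), mul_mul_mul_comm, ENNReal.inv_mul_cancel hc0 hct,
      one_mul]

lemma tsum_measure_slice_eq_measure_image_fst {α : Type*} [MeasurableSpace α] (μ : Measure α)
    {E : Set (α × ℕ)} (hE : MeasurableSet E) (hinj : InjOn Prod.fst E) :
    ∑' n : ℕ, μ {x | (x, n) ∈ E} = μ (Prod.fst '' E) := by
  have hdisj : Pairwise (Function.onFun Disjoint fun n : ℕ => {x | (x, n) ∈ E}) :=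
    fun n n' hne => Set.disjoint_left.2 fun x hx hx' =>
      hne (congrArg Prod.snd (hinj hx hx' rfl : (x, n) = (x, n')))
  rw [← measure_iUnion hdisj fun n => measurable_prodMk_right hE]
  congr 1
  ext x
  simp

section Dynamics

variable {α : Type*} {R : α → ℕ} {g : α → α} {m : ℕ}

lemma towerMap_iterate_of_lt {x : α} {n k : ℕ} (h : n + k < R x) :
    (towerMap R g)^[k] (x, n) = (x, n + k) := by
  induction k with
  | zero => rfl
  | succ k ih =>
    rw [Function.iterate_succ_apply', ih (by omega)]
    simp only [towerMap, if_pos (show n + k + 1 < R x by omega)]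
    rfl

lemma towerMap_iterate_sub {x : α} {n : ℕ} (h : n < R x) :
    (towerMap R g)^[R x - n] (x, n) = (g x, 0) := by
  obtain ⟨k, hk⟩ : ∃ k, R x - n = k + 1 := ⟨R x - n - 1, by omega⟩
  rw [hk, Function.iterate_succ_apply', towerMap_iterate_of_lt (by omega)]
  simp [towerMap, show ¬ n + k + 1 < R x by omega]

lemma inducedMap_eq_iterate {z : α × ℕ} {k : ℕ} (hk : 1 ≤ k)
    (hz : (towerMap R g)^[k] z ∈ truncSet R m)
    (hmin : ∀ i, 1 ≤ i → i < k → (towerMap R g)^[i] z ∉ truncSet R m) :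
    inducedMap R g m z = (towerMap R g)^[k] z := by
  have : returnTime R g m z = k :=
    le_antisymm (Nat.sInf_le ⟨hk, hz⟩) <|
      le_csInf ⟨k, hk, hz⟩ fun i ⟨hi, hiz⟩ => not_lt.1 fun hlt => hmin i hi hlt hiz
  rw [inducedMap, this]

lemma inducedMap_of_lt {x : α} {n : ℕ} (hR : n + 1 < R x) (hm : n + 1 ≤ m) :
    inducedMap R g m (x, n) = (x, n + 1) := by
  rw [inducedMap_eq_iterate le_rfl (by simpa [towerMap, hR, truncSet]) fun i hi hi' => by omega]
  simp [towerMap, hR]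

lemma inducedMap_of_not_lt (hR1 : ∀ x, 1 ≤ R x) {x : α} {n : ℕ} (hx : n < R x)
    (h : ¬ (n + 1 < R x ∧ n + 1 ≤ m)) : inducedMap R g m (x, n) = (g x, 0) := by
  rw [← towerMap_iterate_sub (g := g) hx]
  refine inducedMap_eq_iterate (by omega) ?_ fun i hi hik => ?_
  · rw [towerMap_iterate_sub hx]
    exact ⟨hR1 _, Nat.zero_le _⟩
  · rw [towerMap_iterate_of_lt (by omega)]
    simp only [truncSet, mem_ofPred_eq]
    omega

lemma inducedMap_iterate_eq (hR1 : ∀ x, 1 ≤ R x) {x : α} {n : ℕ} (hx : (x, n) ∈ truncSet R m)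
    (j : ℕ) : ∃ i ≤ j, ∃ n', (inducedMap R g m)^[j] (x, n) = (g^[i] x, n') ∧
      (g^[i] x, n') ∈ truncSet R m ∧ (i = 0 → n' = n + j) := by
  induction j with
  | zero => exact ⟨0, le_rfl, n, rfl, hx, fun _ => rfl⟩
  | succ j ih =>
    obtain ⟨i, hij, n', heq, ⟨hn'R, hn'm⟩, hi0⟩ := ih
    rw [Function.iterate_succ_apply', heq]
    by_cases h : n' + 1 < R (g^[i] x) ∧ n' + 1 ≤ m
    · exact ⟨i, by omega, n' + 1, inducedMap_of_lt h.1 h.2, h, fun hi => by rw [hi0 hi]; ring⟩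
    · refine ⟨i + 1, by omega, 0, ?_, ⟨hR1 _, Nat.zero_le _⟩, by omega⟩
      rw [inducedMap_of_not_lt hR1 hn'R h, Function.iterate_succ_apply']

lemma exists_iterate_mem_image_fst_of_inducedMap_iterate_mem (hR1 : ∀ x, 1 ≤ R x)
    {P : Set (α × ℕ)} (hP : InjOn Prod.fst P) {z : α × ℕ} (hz : z ∈ truncSet R m) (hzP : z ∈ P)
    {j : ℕ} (hj : 1 ≤ j) (hjP : (inducedMap R g m)^[j] z ∈ P) :
    ∃ i ∈ Icc 1 j, g^[i] z.1 ∈ Prod.fst '' P := by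
  obtain ⟨x, n⟩ := z
  obtain ⟨i, hij, n', heq, -, hi0⟩ := inducedMap_iterate_eq hR1 hz j
  rw [heq] at hjP
  refine ⟨i, ⟨Nat.one_le_iff_ne_zero.2 fun hi => ?_, hij⟩, _, hjP, rfl⟩
  subst hi
  have : n = n' := congrArg Prod.snd (hP hzP hjP rfl)
  have := hi0 rfl
  omega

end Dynamics

lemma measurableSet_truncSet {R : X → ℕ} (hR : Measurable R) (m : ℕ) :
    MeasurableSet (truncSet R m) :=
  (measurableSet_lt measurable_snd (hR.comp measurable_fst)).inter
    (measurableSet_le measurable_snd measurable_const)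

lemma towerMeasure_apply (μX : Measure X) (R : X → ℕ) {E : Set (X × ℕ)} (hE : MeasurableSet E) :
    towerMeasure μX R E =
      (∫⁻ x, (R x : ℝ≥0∞) ∂μX)⁻¹ * ∑' n : ℕ, μX ({x | (x, n) ∈ E} ∩ {x | n < R x}) := by
  simp only [towerMeasure, Measure.smul_apply, Measure.sum_apply _ hE, smul_eq_mul]
  congr 1
  refine tsum_congr fun n => ?_
  rw [Measure.map_apply measurable_prodMk_right hE,
    Measure.restrict_apply (measurable_prodMk_right hE)]
  rfl

lemma towerMeasure_truncSet (μX : Measure X) {R : X → ℕ} (hR : Measurable R) (m : ℕ) :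
    towerMeasure μX R (truncSet R m) =
      (∫⁻ x, (R x : ℝ≥0∞) ∂μX)⁻¹ * ∫⁻ x, ((min (R x) (m + 1) : ℕ) : ℝ≥0∞) ∂μX := by
  rw [towerMeasure_apply μX R (measurableSet_truncSet hR m),
    lintegral_natCast_eq_tsum_measure_lt μX (hR.min measurable_const)]
  congr 2 with n
  congr 1 with x
  simp only [truncSet, mem_inter_iff, mem_ofPred_eq, lt_min_iff]
  omega

lemma truncMeasure_le_of_injOn (μX : Measure X) {R : X → ℕ} (hR : Measurable R) (m : ℕ)
    {E : Set (X × ℕ)} (hE : MeasurableSet E) (hEsub : E ⊆ truncSet R m)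
    (hinj : InjOn Prod.fst E) :
    truncMeasure μX R m E ≤
      (∫⁻ x, ((min (R x) (m + 1) : ℕ) : ℝ≥0∞) ∂μX)⁻¹ * μX (Prod.fst '' E) := by
  have hslices : towerMeasure μX R E ≤ (∫⁻ x, (R x : ℝ≥0∞) ∂μX)⁻¹ * μX (Prod.fst '' E) := by
    rw [towerMeasure_apply μX R hE, ← tsum_measure_slice_eq_measure_image_fst μX hE hinj]
    gcongr with n
    exact inter_subset_left
  rw [truncMeasure, Measure.smul_apply, smul_eq_mul, Measure.restrict_apply hE,
    inter_eq_left.2 hEsub, towerMeasure_truncSet μX hR m]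
  exact (mul_le_mul_right hslices _).trans (ENNReal.inv_mul_mul_le _ _ _)

theorem stmt13_general (μX : Measure X)
    (R : X → ℕ) (hRmeas : Measurable R) (hR1 : ∀ x, 1 ≤ R x)
    (g : X → X) (hg : MeasurePreserving g μX μX)
    (m : ℕ)
    (A : Set (X × ℕ))
    (hAsec : Set.InjOn Prod.fst A)
    (hfst : MeasurableSet (Prod.fst '' A))
    (hproj : MeasurableSet (truncProj m '' A))
    (K : ℕ) :
    truncMeasure μX R m (truncSet R m ∩ (truncProj m '' A) ∩
        ⋃ j ∈ Icc 1 (K - 1), (inducedMap R g m)^[j] ⁻¹' (truncProj m '' A))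
      ≤ (∫⁻ x, ((min (R x) (m + 1) : ℕ) : ℝ≥0∞) ∂μX)⁻¹
        * μX ((Prod.fst '' A) ∩ ⋃ j ∈ Icc 1 K, g^[j] ⁻¹' (Prod.fst '' A)) := by
  set P := truncProj m '' A
  set C := Prod.fst '' A ∩ ⋃ j ∈ Icc 1 K, g^[j] ⁻¹' (Prod.fst '' A)
  have hP : InjOn Prod.fst P := InjOn.image_of_comp (f := truncProj m) hAsec
  have hPA : Prod.fst '' P = Prod.fst '' A := image_image _ _ _
  have hC : MeasurableSet C :=
    hfst.inter <| .biUnion (to_countable _) fun j _ => (hg.measurable.iterate j) hfst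
  have hE : MeasurableSet (truncSet R m ∩ P ∩ Prod.fst ⁻¹' C) :=
    ((measurableSet_truncSet hRmeas m).inter hproj).inter (measurable_fst hC)
  have hsub : truncSet R m ∩ P ∩ ⋃ j ∈ Icc 1 (K - 1), (inducedMap R g m)^[j] ⁻¹' P ⊆
      truncSet R m ∩ P ∩ Prod.fst ⁻¹' C := by
    rintro z ⟨⟨hz, hzP⟩, hzU⟩
    obtain ⟨j, hj, hjP⟩ := mem_iUnion₂.1 hzU
    obtain ⟨i, hi, hiP⟩ := exists_iterate_mem_image_fst_of_inducedMap_iterate_mem hR1 hP hz hzP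
      hj.1 hjP
    rw [hPA] at hiP
    exact ⟨⟨hz, hzP⟩, hPA ▸ mem_image_of_mem _ hzP,
      mem_biUnion ⟨hi.1, hi.2.trans (hj.2.trans (Nat.sub_le K 1))⟩ hiP⟩
  calc _ ≤ truncMeasure μX R m (truncSet R m ∩ P ∩ Prod.fst ⁻¹' C) := measure_mono hsub
    _ ≤ _ := truncMeasure_le_of_injOn μX hRmeas m hE (fun z hz => hz.1.1)
        (hP.mono fun z hz => hz.1.2)
    _ ≤ _ := by gcongr; exact image_subset_iff.2 fun z hz => hz.2

/-- **Reduction of short returns from the truncated tower to the base.**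
For every measurable section `A ⊆ Δ` and every integer `K ≥ 2`,
`∫_{Δ_m} 1_{π_{Δ_m}A} · 1_{⋃_{j=1}^{K−1} T_m^{-j}(π_{Δ_m}A)} dμ_{Δ_m}
  ≤ (∫ min(R, m+1) dμ_X)⁻¹ · ∫_X 1_{π_X(A)} · 1_{⋃_{j=1}^{K} g^{-j}(π_X(A))} dμ_X`. -/
theorem stmt13 (μX : Measure X) [IsProbabilityMeasure μX]
    (R : X → ℕ) (hRmeas : Measurable R) (hR1 : ∀ x, 1 ≤ R x)
    (hRint : (∫⁻ x, (R x : ℝ≥0∞) ∂μX) < ⊤)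
    (g : X → X) (hg : MeasurePreserving g μX μX)
    (m : ℕ)
    (A : Set (X × ℕ)) (hAsub : A ⊆ towerSet R) (hAmeas : MeasurableSet A)
    (hAsec : Set.InjOn Prod.fst A)
    (hfst : MeasurableSet (Prod.fst '' A))
    (hproj : MeasurableSet (truncProj m '' A))
    (K : ℕ) (hK : 2 ≤ K) :
    truncMeasure μX R m (truncSet R m ∩ (truncProj m '' A) ∩
        ⋃ j ∈ Icc 1 (K - 1), (inducedMap R g m)^[j] ⁻¹' (truncProj m '' A))
      ≤ (∫⁻ x, ((min (R x) (m + 1) : ℕ) : ℝ≥0∞) ∂μX)⁻¹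
        * μX ((Prod.fst '' A) ∩ ⋃ j ∈ Icc 1 K, g^[j] ⁻¹' (Prod.fst '' A)) :=
  stmt13_general μX R hRmeas hR1 g hg m A hAsec hfst hproj K
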